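/- arXiv:1506.08312 — 2 statements merged into one kernel-verified Lean document; each statement's English description precedes it below -/
import Mathlib

section
/- The ARE value (2/(ν−2))·(Γ((ν+1)/2)/Γ(ν/2))² equals 1 in the limit ν → ∞, and is strictly greater than 1 for all finite ν > 2. -/
/-!
Log-convexity of `Γ` at the midpoints `x = ((x - 1/2) + (x + 1/2))/2` and
`x + 1/2 = (x + (x + 1))/2`, combined with `Γ(s + 1) = s Γ(s)`, traps
`(Γ(x + 1/2)/Γ(x))²` between `x - 1/2` and `x`. With `x = ν/2` the ARE lies between
`(ν - 1)/(ν - 2) > 1` and `ν/(ν - 2) → 1`.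
-/

open Filter Real Topology

namespace Real

theorem Gamma_midpoint_sq_le {s t : ℝ} (hs : 0 < s) (ht : 0 < t) :
    Gamma ((s + t) / 2) ^ 2 ≤ Gamma s * Gamma t := by
  have h := Gamma_mul_add_mul_le_rpow_Gamma_mul_rpow_Gamma hs ht (a := 1 / 2) (b := 1 / 2)
    one_half_pos one_half_pos (add_halves 1)
  have hmid : 1 / 2 * s + 1 / 2 * t = (s + t) / 2 := by ring
  rw [hmid, ← mul_rpow (Gamma_pos_of_pos hs).le (Gamma_pos_of_pos ht).le,
    ← sqrt_eq_rpow] at h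
  calc Gamma ((s + t) / 2) ^ 2 ≤ √(Gamma s * Gamma t) ^ 2 :=
        pow_le_pow_left₀ (Gamma_pos_of_pos (by positivity)).le h 2
    _ = Gamma s * Gamma t :=
        sq_sqrt (mul_pos (Gamma_pos_of_pos hs) (Gamma_pos_of_pos ht)).le

theorem sub_half_le_Gamma_add_half_div_Gamma_sq {x : ℝ} (hx : 1 / 2 < x) :
    x - 1 / 2 ≤ (Gamma (x + 1 / 2) / Gamma x) ^ 2 := by
  have hx₀ : 0 < x - 1 / 2 := by linarith
  have hmid := Gamma_midpoint_sq_le hx₀ (by linarith : 0 < x + 1 / 2)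
  have hrec : Gamma (x + 1 / 2) = (x - 1 / 2) * Gamma (x - 1 / 2) := by
    rw [← Gamma_add_one hx₀.ne']
    ring_nf
  rw [show (x - 1 / 2 + (x + 1 / 2)) / 2 = x by ring] at hmid
  rw [div_pow, le_div_iff₀ (pow_pos (Gamma_pos_of_pos (by linarith)) 2)]
  calc (x - 1 / 2) * Gamma x ^ 2 ≤ (x - 1 / 2) * (Gamma (x - 1 / 2) * Gamma (x + 1 / 2)) :=
        mul_le_mul_of_nonneg_left hmid hx₀.le
    _ = Gamma (x + 1 / 2) ^ 2 := by rw [hrec]; ring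

theorem Gamma_add_half_div_Gamma_sq_le {x : ℝ} (hx : 0 < x) :
    (Gamma (x + 1 / 2) / Gamma x) ^ 2 ≤ x := by
  have hmid := Gamma_midpoint_sq_le hx (by linarith : 0 < x + 1)
  rw [show (x + (x + 1)) / 2 = x + 1 / 2 by ring, Gamma_add_one hx.ne'] at hmid
  rw [div_pow, div_le_iff₀ (pow_pos (Gamma_pos_of_pos hx) 2)]
  linarith

end Real

noncomputable def studentARE (ν : ℝ) : ℝ :=
  2 / (ν - 2) * (Gamma ((ν + 1) / 2) / Gamma (ν / 2)) ^ 2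

theorem studentARE_bounds {ν : ℝ} (hν : 2 < ν) :
    (ν - 1) / (ν - 2) ≤ studentARE ν ∧ studentARE ν ≤ ν / (ν - 2) := by
  have hpos : 0 < ν - 2 := by linarith
  have hshift : ν / 2 + 1 / 2 = (ν + 1) / 2 := by ring
  have hlow := sub_half_le_Gamma_add_half_div_Gamma_sq (x := ν / 2) (by linarith)
  have hupp := Gamma_add_half_div_Gamma_sq_le (x := ν / 2) (by linarith)
  rw [hshift] at hlow hupp
  rw [studentARE, div_mul_eq_mul_div, div_le_div_iff_of_pos_right hpos,
    div_le_div_iff_of_pos_right hpos]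
  constructor <;> linarith

theorem one_lt_studentARE {ν : ℝ} (hν : 2 < ν) : 1 < studentARE ν :=
  calc 1 < (ν - 1) / (ν - 2) := (one_lt_div (by linarith)).2 (by linarith)
    _ ≤ studentARE ν := (studentARE_bounds hν).1

theorem tendsto_div_sub_two_atTop : Tendsto (fun ν : ℝ => ν / (ν - 2)) atTop (𝓝 1) := by
  have h : Tendsto (fun ν : ℝ => 1 + 2 / (ν - 2)) atTop (𝓝 (1 + 0)) :=
    tendsto_const_nhds.add
      (tendsto_const_nhds.div_atTop (tendsto_atTop_add_const_right _ _ tendsto_id))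
  rw [add_zero] at h
  refine h.congr' ?_
  filter_upwards [eventually_gt_atTop 2] with ν hν
  field_simp [sub_ne_zero.mpr hν.ne']
  ring

theorem tendsto_studentARE_atTop : Tendsto studentARE atTop (𝓝 1) :=
  tendsto_of_tendsto_of_tendsto_of_le_of_le' tendsto_const_nhds tendsto_div_sub_two_atTop
    (eventually_gt_atTop 2 |>.mono fun _ hν => (one_lt_studentARE hν).le)
    (eventually_gt_atTop 2 |>.mono fun _ hν => (studentARE_bounds hν).2)

/-- The ARE function `g(ν) = (2/(ν−2))·(Γ((ν+1)/2)/Γ(ν/2))²` tends to `1` as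
`ν → ∞` and is strictly greater than `1` for every finite `ν > 2`. -/
theorem ARE_limit_and_gt_one :
    Tendsto (fun ν : ℝ => (2 / (ν - 2)) *
        (Real.Gamma ((ν + 1) / 2) / Real.Gamma (ν / 2)) ^ 2) atTop (nhds 1) ∧
      ∀ ν : ℝ, 2 < ν →
        1 < (2 / (ν - 2)) * (Real.Gamma ((ν + 1) / 2) / Real.Gamma (ν / 2)) ^ 2 :=
  ⟨tendsto_studentARE_atTop, fun _ => one_lt_studentARE⟩
end

section
/- If U, V are independent uniform on S^{p−1} and A symmetric p×p, then E[(U^T A V)^4] ≤ C p^{-4} (∑_{i,j} A_{ij}^2)^2 = C p^{-4} tr(A^2)^2 for a universal constant C (e.g., C = 9). -/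
/-!
By rotation invariance `∫ ⟪w, x⟫⁴ dμ(x) = c ‖w‖⁴`, where `c` is the fourth moment of a
coordinate. Polarizing with `(s + t)⁴ + (s - t)⁴ = 2 s⁴ + 12 s² t² + 2 t⁴` turns this into
`∫ ⟪a, x⟫² ⟪b, x⟫² = c (‖a‖² ‖b‖² + 2 ⟪a, b⟫²) / 3`. Summed over an orthonormal basis it gives
`1 = ∫ ‖x‖⁴ = c p (p + 2) / 3`, and summed over the rows of `A` it gives, with Cauchy–Schwarz,
`∫ ‖A x‖⁴ ≤ c tr(A²)²`. By Fubini the moment `E[(Uᵀ A V)⁴] = c E ‖A V‖⁴` is then at most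
`c² tr(A²)² = 9 tr(A²)² / (p (p + 2))²`.
-/

open MeasureTheory Module
open scoped RealInnerProductSpace

theorem integrable_norm_pow_four_of_ae_norm_eq_one {E : Type*} [NormedAddCommGroup E]
    [MeasurableSpace E] {μ : Measure E} [IsFiniteMeasure μ] (hsupp : ∀ᵐ x ∂μ, ‖x‖ = 1) :
    Integrable (fun x => ‖x‖ ^ 4) μ :=
  (integrable_const 1).congr (hsupp.mono fun x hx => by simp [hx])

section InnerProductSpace

variable {E : Type*} [NormedAddCommGroup E] [InnerProductSpace ℝ E]

theorem real_inner_sq_le_norm_sq_mul_norm_sq (x y : E) : ⟪x, y⟫ ^ 2 ≤ ‖x‖ ^ 2 * ‖y‖ ^ 2 := by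
  simpa [mul_pow] using pow_le_pow_left₀ (abs_nonneg _) (abs_real_inner_le_norm x y) 2

theorem exists_linearIsometryEquiv_apply_eq {v w : E} (h : ‖v‖ = ‖w‖) :
    ∃ O : E ≃ₗᵢ[ℝ] E, O v = w :=
  ⟨Submodule.reflection (ℝ ∙ (v - w))ᗮ, Submodule.reflection_sub h⟩

variable [MeasurableSpace E] [BorelSpace E] {μ : Measure E}

theorem integrable_inner_sq_mul_inner_sq (h4 : Integrable (fun x => ‖x‖ ^ 4) μ) (a b : E) :
    Integrable (fun x => ⟪a, x⟫ ^ 2 * ⟪b, x⟫ ^ 2) μ := by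
  refine (h4.const_mul (‖a‖ ^ 2 * ‖b‖ ^ 2)).mono' (by fun_prop) (.of_forall fun x => ?_)
  rw [Real.norm_eq_abs, abs_of_nonneg (by positivity)]
  calc ⟪a, x⟫ ^ 2 * ⟪b, x⟫ ^ 2 ≤ (‖a‖ ^ 2 * ‖x‖ ^ 2) * (‖b‖ ^ 2 * ‖x‖ ^ 2) :=
        mul_le_mul (real_inner_sq_le_norm_sq_mul_norm_sq a x)
          (real_inner_sq_le_norm_sq_mul_norm_sq b x) (sq_nonneg _) (by positivity)
    _ = ‖a‖ ^ 2 * ‖b‖ ^ 2 * ‖x‖ ^ 4 := by ring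

theorem integrable_inner_pow_four (h4 : Integrable (fun x => ‖x‖ ^ 4) μ) (a : E) :
    Integrable (fun x => ⟪a, x⟫ ^ 4) μ := by
  simpa [← pow_add] using integrable_inner_sq_mul_inner_sq h4 a a

section Invariant

variable (hinv : ∀ O : E ≃ₗᵢ[ℝ] E, μ.map O = μ)
include hinv

theorem integral_inner_pow_four_eq_of_norm_eq {v w : E} (h : ‖v‖ = ‖w‖) :
    ∫ x, ⟪w, x⟫ ^ 4 ∂μ = ∫ x, ⟪v, x⟫ ^ 4 ∂μ := by
  obtain ⟨O, rfl⟩ := exists_linearIsometryEquiv_apply_eq h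
  conv_lhs => rw [← hinv O]
  rw [← O.coe_toMeasurableEquiv, integral_map_equiv]
  simp

theorem integral_inner_pow_four {e : E} (he : ‖e‖ = 1) (w : E) :
    ∫ x, ⟪w, x⟫ ^ 4 ∂μ = ‖w‖ ^ 4 * ∫ x, ⟪e, x⟫ ^ 4 ∂μ := by
  have hnorm : ‖‖w‖ • e‖ = ‖w‖ := by simp [norm_smul, he]
  rw [integral_inner_pow_four_eq_of_norm_eq hinv hnorm, ← integral_const_mul]
  simp only [real_inner_smul_left, mul_pow]

variable (h4 : Integrable (fun x => ‖x‖ ^ 4) μ) {e : E} (he : ‖e‖ = 1)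
include h4 he

theorem integral_inner_sq_mul_inner_sq (a b : E) :
    ∫ x, ⟪a, x⟫ ^ 2 * ⟪b, x⟫ ^ 2 ∂μ =
      (‖a‖ ^ 2 * ‖b‖ ^ 2 + 2 * ⟪a, b⟫ ^ 2) / 3 * ∫ x, ⟪e, x⟫ ^ 4 ∂μ := by
  have hpolar (x : E) : ⟪a, x⟫ ^ 2 * ⟪b, x⟫ ^ 2 =
      (⟪a + b, x⟫ ^ 4 + ⟪a - b, x⟫ ^ 4 - 2 * ⟪a, x⟫ ^ 4 - 2 * ⟪b, x⟫ ^ 4) / 12 := by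
    rw [inner_add_left, inner_sub_left]; ring
  have hI := integrable_inner_pow_four h4
  simp_rw [hpolar]
  rw [integral_div, integral_sub, integral_sub, integral_add, integral_const_mul,
    integral_const_mul]
  all_goals try fun_prop
  rw [integral_inner_pow_four hinv he (a + b), integral_inner_pow_four hinv he (a - b),
    integral_inner_pow_four hinv he a, integral_inner_pow_four hinv he b,
    show ‖a + b‖ ^ 4 = (‖a + b‖ ^ 2) ^ 2 by ring, show ‖a - b‖ ^ 4 = (‖a - b‖ ^ 2) ^ 2 by ring,
    norm_add_sq_real, norm_sub_sq_real]
  ring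

theorem integral_sum_inner_sq_sq {ι : Type*} [Fintype ι] (a : ι → E) :
    ∫ x, (∑ j, ⟪a j, x⟫ ^ 2) ^ 2 ∂μ =
      ((∑ j, ‖a j‖ ^ 2) ^ 2 + 2 * ∑ j, ∑ k, ⟪a j, a k⟫ ^ 2) / 3 * ∫ x, ⟪e, x⟫ ^ 4 ∂μ := by
  have hexpand (x : E) : (∑ j, ⟪a j, x⟫ ^ 2) ^ 2 = ∑ j, ∑ k, ⟪a j, x⟫ ^ 2 * ⟪a k, x⟫ ^ 2 := by
    rw [sq, Finset.sum_mul_sum]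
  simp_rw [hexpand]
  rw [integral_finsetSum _ fun j _ => integrable_finsetSum _ fun k _ =>
    integrable_inner_sq_mul_inner_sq h4 _ _]
  simp_rw [integral_finsetSum _ fun k _ => integrable_inner_sq_mul_inner_sq h4 _ _,
    integral_inner_sq_mul_inner_sq hinv h4 he, ← Finset.sum_mul, ← Finset.sum_div,
    Finset.sum_add_distrib, ← Finset.mul_sum]
  rw [← Finset.sum_mul, sq]

theorem integral_sum_inner_sq_sq_le {ι : Type*} [Fintype ι] (a : ι → E) :
    ∫ x, (∑ j, ⟪a j, x⟫ ^ 2) ^ 2 ∂μ ≤ (∑ j, ‖a j‖ ^ 2) ^ 2 * ∫ x, ⟪e, x⟫ ^ 4 ∂μ := by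
  have hgram : ∑ j, ∑ k, ⟪a j, a k⟫ ^ 2 ≤ (∑ j, ‖a j‖ ^ 2) ^ 2 := by
    rw [sq (∑ j, _), Finset.sum_mul_sum]
    gcongr with j _ k _
    exact real_inner_sq_le_norm_sq_mul_norm_sq _ _
  rw [integral_sum_inner_sq_sq hinv h4 he]
  gcongr
  linarith

theorem integral_norm_pow_four [FiniteDimensional ℝ E] :
    ∫ x, ‖x‖ ^ 4 ∂μ = finrank ℝ E * (finrank ℝ E + 2) / 3 * ∫ x, ⟪e, x⟫ ^ 4 ∂μ := by
  classical
  set b := stdOrthonormalBasis ℝ E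
  have hnorm : ∑ j, ‖b j‖ ^ 2 = finrank ℝ E := by simp
  have hgram : ∑ j, ∑ k, ⟪b j, b k⟫ ^ 2 = finrank ℝ E := by simp [b.inner_eq_ite]
  simp_rw [show ∀ x : E, ‖x‖ ^ 4 = (∑ j, ⟪b j, x⟫ ^ 2) ^ 2 by
    intro x; rw [b.sum_sq_inner_right]; ring]
  rw [integral_sum_inner_sq_sq hinv h4 he, hnorm, hgram]
  ring

theorem integral_prod_inner_apply_pow_four [SecondCountableTopology E] [SFinite μ]
    (T : E →L[ℝ] E) :
    ∫ z, ⟪z.1, T z.2⟫ ^ 4 ∂μ.prod μ = (∫ x, ⟪e, x⟫ ^ 4 ∂μ) * ∫ x, ‖T x‖ ^ 4 ∂μ := by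
  have hint : Integrable (fun z : E × E => ⟪z.1, T z.2⟫ ^ 4) (μ.prod μ) := by
    refine (h4.mul_prod (h4.const_mul (‖T‖ ^ 4))).mono' (by fun_prop) (.of_forall fun z => ?_)
    rw [Real.norm_eq_abs, abs_pow]
    calc |⟪z.1, T z.2⟫| ^ 4 ≤ (‖z.1‖ * (‖T‖ * ‖z.2‖)) ^ 4 := by
          gcongr
          exact (abs_real_inner_le_norm _ _).trans (by gcongr; exact T.le_opNorm _)
      _ = ‖z.1‖ ^ 4 * (‖T‖ ^ 4 * ‖z.2‖ ^ 4) := by ring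
  rw [integral_prod_symm _ hint, ← integral_const_mul]
  refine integral_congr_ae (.of_forall fun y => ?_)
  simp only [real_inner_comm (T y)]
  rw [mul_comm, integral_inner_pow_four hinv he (T y)]

omit h4 in
theorem integral_inner_pow_four_eq_of_ae_norm_eq_one [FiniteDimensional ℝ E]
    [IsProbabilityMeasure μ] (hsupp : ∀ᵐ x ∂μ, ‖x‖ = 1) :
    ∫ x, ⟪e, x⟫ ^ 4 ∂μ = 3 / (finrank ℝ E * (finrank ℝ E + 2)) := by
  have h := integral_norm_pow_four hinv (integrable_norm_pow_four_of_ae_norm_eq_one hsupp) he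
  have hnorm4 : (fun x => ‖x‖ ^ 4) =ᵐ[μ] fun _ => (1 : ℝ) := hsupp.mono fun x hx => by simp [hx]
  rw [integral_congr_ae hnorm4] at h
  simp only [integral_const, probReal_univ, smul_eq_mul, one_mul] at h
  have hpos : (finrank ℝ E : ℝ) * (finrank ℝ E + 2) ≠ 0 := by
    intro h0; rw [h0] at h; simp at h
  rw [eq_div_iff hpos]
  linarith

end Invariant

end InnerProductSpace

namespace Matrix

variable {n : Type*} [Fintype n] [DecidableEq n]

theorem sum_sum_mul_mul_eq_inner_toEuclideanCLM (A : Matrix n n ℝ) (u v : EuclideanSpace ℝ n) :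
    ∑ i, ∑ j, u i * A i j * v j = ⟪u, toEuclideanCLM (𝕜 := ℝ) A v⟫ := by
  simp [inner_toEuclideanCLM, dotProduct, mulVec, Finset.mul_sum, mul_assoc]

theorem norm_toEuclideanCLM_apply_sq (A : Matrix n n ℝ) (v : EuclideanSpace ℝ n) :
    ‖toEuclideanCLM (𝕜 := ℝ) A v‖ ^ 2 = ∑ i, ⟪WithLp.toLp 2 (A i), v⟫ ^ 2 := by
  simp [EuclideanSpace.real_norm_sq_eq, EuclideanSpace.inner_eq_star_dotProduct, mulVec,
    dotProduct, mul_comm]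

omit [DecidableEq n] in
theorem sum_norm_toLp_row_sq (A : Matrix n n ℝ) :
    ∑ i, ‖WithLp.toLp 2 (A i)‖ ^ 2 = trace (A * Aᵀ) := by
  simp only [EuclideanSpace.real_norm_sq_eq]
  simp [trace, mul_apply, sq]

end Matrix

open Matrix in
/-- If `U, V` are independent and uniform on the unit sphere `S^{p-1}` and `A` is a
symmetric `p × p` matrix, then `E[(Uᵀ A V)⁴] ≤ C p^{-4} tr(A²)²` with `C = 9`. -/
theorem sphere_bilinear_form_fourth_moment (p : ℕ) (hp : 0 < p)
    (μ : Measure (EuclideanSpace ℝ (Fin p))) [IsProbabilityMeasure μ]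
    (hsupp : ∀ᵐ x ∂μ, ‖x‖ = 1)
    (hinv : ∀ O : EuclideanSpace ℝ (Fin p) ≃ₗᵢ[ℝ] EuclideanSpace ℝ (Fin p),
      μ.map O = μ)
    (A : Matrix (Fin p) (Fin p) ℝ) (hA : A.IsSymm) :
    ∫ z, (∑ i : Fin p, ∑ j : Fin p, z.1 i * A i j * z.2 j) ^ 4 ∂(μ.prod μ) ≤
      9 / (p : ℝ) ^ 4 * (Matrix.trace (A * A)) ^ 2 := by
  set e := EuclideanSpace.single (⟨0, hp⟩ : Fin p) (1 : ℝ)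
  have he : ‖e‖ = 1 := by simp [e]
  have h4 := integrable_norm_pow_four_of_ae_norm_eq_one hsupp
  have hc := integral_inner_pow_four_eq_of_ae_norm_eq_one hinv he hsupp
  rw [finrank_euclideanSpace_fin] at hc
  set c := ∫ x, ⟪e, x⟫ ^ 4 ∂μ
  have hrows := sum_norm_toLp_row_sq A
  rw [hA.eq] at hrows
  have hnorm4 (v : EuclideanSpace ℝ (Fin p)) :
      ‖toEuclideanCLM (𝕜 := ℝ) A v‖ ^ 4 = (∑ i, ⟪WithLp.toLp 2 (A i), v⟫ ^ 2) ^ 2 := by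
    rw [← norm_toEuclideanCLM_apply_sq]; ring
  calc _ = c * ∫ v, ‖toEuclideanCLM (𝕜 := ℝ) A v‖ ^ 4 ∂μ := by
        simp only [sum_sum_mul_mul_eq_inner_toEuclideanCLM,
          integral_prod_inner_apply_pow_four hinv h4 he]
        rfl
    _ ≤ c * (trace (A * A) ^ 2 * c) := by
        simp only [hnorm4, ← hrows]
        gcongr
        exact integral_sum_inner_sq_sq_le hinv h4 he _
    _ = (3 / (p * (p + 2))) ^ 2 * trace (A * A) ^ 2 := by rw [hc]; ring
    _ ≤ (3 / p ^ 2) ^ 2 * trace (A * A) ^ 2 := by gcongr; nlinarith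
    _ = 9 / (p : ℝ) ^ 4 * trace (A * A) ^ 2 := by ring
end
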